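/- The function β ↦ I_β := √β ∫_ℝ (2π)^{-1/2} e^{−β(cosh t −1)} dt is strictly increasing on (0,∞), and for every integer d ≥ 2 the equation I_β · e^{β(2d−2)} · (2d−1) = 1 has a unique solution β_c^d ∈ (0,∞). -/

import Mathlib

open Real

noncomputable section

/-- `I_β = √β ∫_ℝ (2π)^{-1/2} e^{-β(cosh t - 1)} dt`. -/
def Ieta (β : ℝ) : ℝ :=
  Real.sqrt β * ∫ s : ℝ, (Real.sqrt (2 * Real.pi))⁻¹ * Real.exp (-β * (Real.cosh s - 1))

/-!
Substituting `s = u / √β` gives `I_β = ∫ (2π)^{-1/2} exp (-u² ψ(u / √β)) du` with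
`ψ x = (cosh x - 1) / x² = ∑ x^{2n} / (2n+2)!`, which is even and increasing in `|x|`. So the
integrand increases pointwise with `β`, is dominated by the standard Gaussian density (`ψ ≥ 1/2`),
and tends to `0` as `β → 0⁺` (`ψ x ≥ x² / 24`). Hence `I_β` is continuous, strictly increasing
and tends to `0` at `0⁺`; multiplied by the unbounded increasing factor `e^{β(2d-2)}` it crosses
the level `1/(2d-1)` exactly once.
-/

open Set Filter Topology MeasureTheory ProbabilityTheory
open scoped Nat

namespace Real

lemma one_add_sq_div_two_add_pow_four_div_le_cosh (x : ℝ) :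
    1 + x ^ 2 / 2 + x ^ 4 / 24 ≤ cosh x := by
  have h := sum_le_hasSum (Finset.range 3)
    (fun n _ => div_nonneg ((even_two_mul n).pow_nonneg x) (by positivity)) (hasSum_cosh x)
  norm_num [Finset.sum_range_succ, Nat.factorial] at h
  linarith

lemma hasSum_cosh_sub_one_div_sq {x : ℝ} (hx : x ≠ 0) :
    HasSum (fun n : ℕ => x ^ (2 * n) / (2 * n + 2)!) ((cosh x - 1) / x ^ 2) := by
  have h := ((hasSum_nat_add_iff' 1).2 (hasSum_cosh x)).div_const (x ^ 2)
  have hterm (n : ℕ) :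
      x ^ (2 * (n + 1)) / (2 * (n + 1))! / x ^ 2 = x ^ (2 * n) / (2 * n + 2)! := by
    rw [mul_add, mul_one, pow_add, mul_div_right_comm, mul_div_assoc, div_self (pow_ne_zero 2 hx),
      mul_one]
  simpa [hterm] using h

lemma strictMonoOn_cosh_sub_one_div_sq : StrictMonoOn (fun x => (cosh x - 1) / x ^ 2) (Ioi 0) :=
  fun a ha b _ hab => hasSum_lt (i := 1)
    (fun n => by gcongr; exact ha.out.le)
    (by gcongr; exact ha.out.le)
    (hasSum_cosh_sub_one_div_sq ha.out.ne') (hasSum_cosh_sub_one_div_sq (ha.out.trans hab).ne')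

end Real

lemma sq_div_two_add_pow_four_div_le_mul_cosh_div_sqrt_sub_one {β : ℝ} (hβ : 0 < β) (u : ℝ) :
    u ^ 2 / 2 + u ^ 4 / (24 * β) ≤ β * (cosh (u / √β) - 1) := by
  have h := one_add_sq_div_two_add_pow_four_div_le_cosh (u / √β)
  have hsq : √β ^ 2 = β := sq_sqrt hβ.le
  have hquartic : √β ^ 4 = β ^ 2 := by rw [show 4 = 2 * 2 from rfl, pow_mul, hsq]
  rw [div_pow, div_pow, hsq, hquartic] at h
  calc u ^ 2 / 2 + u ^ 4 / (24 * β) = β * (u ^ 2 / β / 2 + u ^ 4 / β ^ 2 / 24) := by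
        field_simp
    _ ≤ β * (cosh (u / √β) - 1) := by gcongr; linarith

lemma strictAntiOn_mul_cosh_div_sqrt_sub_one {u : ℝ} (hu : u ≠ 0) :
    StrictAntiOn (fun β => β * (cosh (u / √β) - 1)) (Ioi 0) := by
  have hscale {β : ℝ} (hβ : 0 < β) :
      β * (cosh (u / √β) - 1) = u ^ 2 * ((cosh (|u| / √β) - 1) / (|u| / √β) ^ 2) := by
    rw [← cosh_abs (u / √β), abs_div, abs_of_pos (sqrt_pos.2 hβ), div_pow, sq_sqrt hβ.le, sq_abs]
    field_simp
  intro β₁ h₁ β₂ h₂ h₁₂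
  simp only [hscale h₁, hscale h₂]
  have hlt : |u| / √β₂ < |u| / √β₁ :=
    div_lt_div_of_pos_left (abs_pos.2 hu) (sqrt_pos.2 h₁) (sqrt_lt_sqrt h₁.out.le h₁₂)
  exact mul_lt_mul_of_pos_left
    (strictMonoOn_cosh_sub_one_div_sq (div_pos (abs_pos.2 hu) (sqrt_pos.2 h₂))
      (div_pos (abs_pos.2 hu) (sqrt_pos.2 h₁)) hlt) (by positivity)

def scaledIntegrand (β u : ℝ) : ℝ := (√(2 * π))⁻¹ * exp (-β * (cosh (u / √β) - 1))

lemma Ieta_eq_integral_scaledIntegrand (β : ℝ) : Ieta β = ∫ u, scaledIntegrand β u := by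
  unfold Ieta scaledIntegrand
  rw [Measure.integral_comp_div (fun s => (√(2 * π))⁻¹ * exp (-β * (cosh s - 1))) √β,
    abs_of_nonneg (sqrt_nonneg β), smul_eq_mul]

lemma continuous_scaledIntegrand (β : ℝ) : Continuous (scaledIntegrand β) := by
  unfold scaledIntegrand; fun_prop

lemma scaledIntegrand_pos (β u : ℝ) : 0 < scaledIntegrand β u := by
  unfold scaledIntegrand; positivity

lemma norm_scaledIntegrand_le_gaussianPDFReal {β : ℝ} (hβ : 0 < β) (u : ℝ) :
    ‖scaledIntegrand β u‖ ≤ gaussianPDFReal 0 1 u := by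
  rw [norm_of_nonneg (scaledIntegrand_pos β u).le, scaledIntegrand, gaussianPDFReal]
  have hexponent := sq_div_two_add_pow_four_div_le_mul_cosh_div_sqrt_sub_one hβ u
  have hquartic : 0 ≤ u ^ 4 / (24 * β) := by positivity
  simp only [NNReal.coe_one, mul_one, sub_zero]
  gcongr
  linarith

lemma strictMonoOn_scaledIntegrand_left {u : ℝ} (hu : u ≠ 0) :
    StrictMonoOn (fun β => scaledIntegrand β u) (Ioi 0) := fun β₁ h₁ β₂ h₂ h => by
  simp only [scaledIntegrand, neg_mul]
  exact mul_lt_mul_of_pos_left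
    (exp_lt_exp.2 (neg_lt_neg (strictAntiOn_mul_cosh_div_sqrt_sub_one hu h₁ h₂ h))) (by positivity)

lemma monotoneOn_scaledIntegrand_left (u : ℝ) :
    MonotoneOn (fun β => scaledIntegrand β u) (Ioi 0) := by
  rcases eq_or_ne u 0 with rfl | hu
  · intro β₁ _ β₂ _ _
    simp [scaledIntegrand]
  · exact (strictMonoOn_scaledIntegrand_left hu).monotoneOn

lemma continuousOn_scaledIntegrand_left (u : ℝ) :
    ContinuousOn (fun β => scaledIntegrand β u) (Ioi 0) := by
  intro β hβ
  have : √β ≠ 0 := (sqrt_pos.2 hβ).ne'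
  unfold scaledIntegrand
  exact (by fun_prop (disch := assumption) : ContinuousAt _ β).continuousWithinAt

lemma tendsto_scaledIntegrand_nhdsGT_zero {u : ℝ} (hu : u ≠ 0) :
    Tendsto (fun β => scaledIntegrand β u) (𝓝[>] 0) (𝓝 0) := by
  have hbound : Tendsto (fun β => (√(2 * π))⁻¹ * exp (-(u ^ 4 / 24 * β⁻¹))) (𝓝[>] 0) (𝓝 0) := by
    simpa using (tendsto_exp_neg_atTop_nhds_zero.comp
      (tendsto_inv_nhdsGT_zero.const_mul_atTop (by positivity))).const_mul (√(2 * π))⁻¹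
  refine tendsto_of_tendsto_of_tendsto_of_le_of_le' tendsto_const_nhds hbound
    (Eventually.of_forall fun β => (scaledIntegrand_pos β u).le) ?_
  filter_upwards [self_mem_nhdsWithin] with β hβ
  have hexponent := sq_div_two_add_pow_four_div_le_mul_cosh_div_sqrt_sub_one hβ u
  rw [scaledIntegrand, neg_mul, show u ^ 4 / 24 * β⁻¹ = u ^ 4 / (24 * β) by ring]
  gcongr
  linarith [sq_nonneg u]

lemma integrable_scaledIntegrand {β : ℝ} (hβ : 0 < β) : Integrable (scaledIntegrand β) :=
  (integrable_gaussianPDFReal 0 1).mono' (continuous_scaledIntegrand β).aestronglyMeasurable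
    (ae_of_all _ (norm_scaledIntegrand_le_gaussianPDFReal hβ))

lemma Ieta_pos {β : ℝ} (hβ : 0 < β) : 0 < Ieta β := by
  rw [Ieta_eq_integral_scaledIntegrand]
  exact integral_pos_of_integrable_nonneg_nonzero (x := 0) (continuous_scaledIntegrand β)
    (integrable_scaledIntegrand hβ) (fun u => (scaledIntegrand_pos β u).le)
    (scaledIntegrand_pos β 0).ne'

lemma strictMonoOn_Ieta : StrictMonoOn Ieta (Ioi 0) := by
  intro β₁ h₁ β₂ h₂ h
  rw [Ieta_eq_integral_scaledIntegrand, Ieta_eq_integral_scaledIntegrand, ← sub_pos,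
    ← integral_sub (integrable_scaledIntegrand h₂) (integrable_scaledIntegrand h₁)]
  exact integral_pos_of_integrable_nonneg_nonzero (x := 1)
    ((continuous_scaledIntegrand β₂).sub (continuous_scaledIntegrand β₁))
    ((integrable_scaledIntegrand h₂).sub (integrable_scaledIntegrand h₁))
    (fun u => sub_nonneg.2 (monotoneOn_scaledIntegrand_left u h₁ h₂ h.le))
    (sub_pos.2 (strictMonoOn_scaledIntegrand_left one_ne_zero h₁ h₂ h)).ne'

lemma continuousOn_Ieta : ContinuousOn Ieta (Ioi 0) := by
  rw [funext Ieta_eq_integral_scaledIntegrand]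
  exact continuousOn_of_dominated (fun β _ => (continuous_scaledIntegrand β).aestronglyMeasurable)
    (fun β hβ => ae_of_all _ (norm_scaledIntegrand_le_gaussianPDFReal hβ))
    (integrable_gaussianPDFReal 0 1) (ae_of_all _ continuousOn_scaledIntegrand_left)

lemma tendsto_Ieta_nhdsGT_zero : Tendsto Ieta (𝓝[>] 0) (𝓝 0) := by
  rw [funext Ieta_eq_integral_scaledIntegrand]
  simpa using tendsto_integral_filter_of_dominated_convergence (l := 𝓝[>] 0)
    (gaussianPDFReal 0 1)
    (Eventually.of_forall fun β => (continuous_scaledIntegrand β).aestronglyMeasurable)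
    (eventually_mem_nhdsWithin.mono fun β hβ =>
      ae_of_all _ (norm_scaledIntegrand_le_gaussianPDFReal hβ))
    (integrable_gaussianPDFReal 0 1)
    ((volume.ae_ne 0).mono fun u hu => tendsto_scaledIntegrand_nhdsGT_zero hu)

lemma StrictMonoOn.existsUnique_eq_of_tendsto {α δ : Type*} [ConditionallyCompleteLinearOrder α]
    [TopologicalSpace α] [OrderTopology α] [DenselyOrdered α] [NoMaxOrder α] [LinearOrder δ]
    [TopologicalSpace δ] [OrderClosedTopology δ] [NoMaxOrder δ] {f : α → δ} {a : α} {l c : δ}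
    (hmono : StrictMonoOn f (Ioi a)) (hcont : ContinuousOn f (Ioi a))
    (hbot : Tendsto f (𝓝[>] a) (𝓝 l)) (htop : Tendsto f atTop atTop) (hlc : l < c) :
    ∃! x, a < x ∧ f x = c := by
  obtain ⟨x₀, hfx₀, hx₀⟩ := ((hbot.eventually_lt_const hlc).and self_mem_nhdsWithin).exists
  obtain ⟨x₁, hfx₁, hx₀₁⟩ := ((htop.eventually_gt_atTop c).and (eventually_ge_atTop x₀)).exists
  obtain ⟨x, hx, hfx⟩ := intermediate_value_Icc hx₀₁
    (hcont.mono (Icc_subset_Ioi_iff hx₀₁ |>.2 hx₀)) ⟨hfx₀.le, hfx₁.le⟩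
  have hax : a < x := lt_of_lt_of_le hx₀ hx.1
  exact ⟨x, ⟨hax, hfx⟩, fun y ⟨hay, hfy⟩ => hmono.injOn hay hax (hfy.trans hfx.symm)⟩

lemma existsUnique_Ieta_mul_exp_mul_eq_one {e c : ℝ} (he : 0 < e) (hc : 0 < c) :
    ∃! β : ℝ, 0 < β ∧ Ieta β * exp (β * e) * c = 1 := by
  refine StrictMonoOn.existsUnique_eq_of_tendsto (l := 0) ?_ ?_ ?_ ?_ one_pos
  · intro x hx y hy hxy
    have hexp : exp (x * e) < exp (y * e) := exp_lt_exp.2 (mul_lt_mul_of_pos_right hxy he)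
    exact mul_lt_mul_of_pos_right
      (mul_lt_mul'' (strictMonoOn_Ieta hx hy hxy) hexp (Ieta_pos hx).le (exp_pos _).le) hc
  · exact (continuousOn_Ieta.mul (by fun_prop)).mul continuousOn_const
  · simpa using (tendsto_Ieta_nhdsGT_zero.mul
      (((continuous_exp.comp (continuous_mul_const e)).tendsto 0).mono_left
        nhdsWithin_le_nhds)).mul_const c
  · have hlower : Tendsto (fun β => Ieta 1 * c * exp (β * e)) atTop atTop :=
      (tendsto_exp_atTop.comp (tendsto_id.atTop_mul_const he)).const_mul_atTop
        (mul_pos (Ieta_pos one_pos) hc)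
    refine tendsto_atTop_mono' _ ?_ hlower
    filter_upwards [eventually_ge_atTop 1] with β hβ
    have hIeta : Ieta 1 ≤ Ieta β :=
      strictMonoOn_Ieta.monotoneOn (mem_Ioi.2 one_pos) (mem_Ioi.2 (one_pos.trans_le hβ)) hβ
    calc Ieta 1 * c * exp (β * e) = Ieta 1 * exp (β * e) * c := by ring
      _ ≤ Ieta β * exp (β * e) * c := by gcongr

/-- Theorem: `β ↦ I_β` is strictly increasing on `(0,∞)` and, for every integer `d ≥ 2`,
the equation `I_β e^{β(2d-2)} (2d-1) = 1` has a unique solution `β_c^d ∈ (0,∞)`. -/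
theorem Ieta_strictMono_and_critical_point :
    StrictMonoOn Ieta (Set.Ioi 0) ∧
    ∀ d : ℕ, 2 ≤ d →
      ∃! β : ℝ, 0 < β ∧
        Ieta β * Real.exp (β * (2 * (d : ℝ) - 2)) * (2 * (d : ℝ) - 1) = 1 := by
  refine ⟨strictMonoOn_Ieta, fun d hd => ?_⟩
  have hd' : (2 : ℝ) ≤ d := by exact_mod_cast hd
  exact existsUnique_Ieta_mul_exp_mul_eq_one (by linarith) (by linarith)
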